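/- (d'Ocagne's identity for bicomplex Pell numbers) For all integers m and n, BP(m)·BP(n+1) − BP(m+1)·BP(n) = 12·(−1)^n·P(m−n)·(j + ij). -/

import Mathlib

open scoped TensorProduct

noncomputable def bi : ℂ ⊗[ℝ] ℂ := Complex.I ⊗ₜ[ℝ] 1
noncomputable def bj : ℂ ⊗[ℝ] ℂ := (1 : ℂ) ⊗ₜ[ℝ] Complex.I
noncomputable def bij : ℂ ⊗[ℝ] ℂ := Complex.I ⊗ₜ[ℝ] Complex.I

/-- The bicomplex Pell number `BP n = P n + P (n+1) i + P (n+2) j + P (n+3) ij`. -/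
noncomputable def BP (P : ℤ → ℤ) (n : ℤ) : ℂ ⊗[ℝ] ℂ :=
  (P n : ℝ) • (1 : ℂ ⊗[ℝ] ℂ) + (P (n + 1) : ℝ) • bi + (P (n + 2) : ℝ) • bj +
    (P (n + 3) : ℝ) • bij

/-! The Casoratian `X m * Y (n + 1) - X (m + 1) * Y n` of two solutions of
`x (n + 2) = a * x (n + 1) + x n` changes sign when both indices are shifted by one (the
companion matrix of the recurrence has determinant `-1`), so it is `(-1) ^ n` times its value at
`(m - n, 0)`. The bicomplex Pell numbers satisfy the Pell recurrence themselves, and as `BP k` is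
a combination of `P k` and `P (k + 1)` with fixed bicomplex coefficients, the Casoratian of `BP`
at `(k, 0)` is computed in coordinates to be `12 * P k * (j + ij)`. -/

section Casoratian

variable {R : Type*} [CommRing R]

def casoratian (X Y : ℤ → R) (m n : ℤ) : R := X m * Y (n + 1) - X (m + 1) * Y n

variable {a : R} {X Y : ℤ → R}

theorem casoratian_add_one_add_one (hX : ∀ n, X (n + 2) = a * X (n + 1) + X n)
    (hY : ∀ n, Y (n + 2) = a * Y (n + 1) + Y n) (m n : ℤ) :
    casoratian X Y (m + 1) (n + 1) = -casoratian X Y m n := by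
  simp only [casoratian, add_assoc, one_add_one_eq_two, hX, hY]
  ring

theorem casoratian_eq_negOnePow_smul (hX : ∀ n, X (n + 2) = a * X (n + 1) + X n)
    (hY : ∀ n, Y (n + 2) = a * Y (n + 1) + Y n) (m n : ℤ) :
    casoratian X Y m n = n.negOnePow • casoratian X Y (m - n) 0 := by
  induction n using Int.induction_on generalizing m with
  | zero => simp
  | succ n ih =>
    rw [← sub_add_cancel m 1, casoratian_add_one_add_one hX hY, ih, Int.negOnePow_succ,
      Units.neg_smul, add_sub_add_right_eq_sub, sub_sub]
  | pred n ih =>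
    have h := casoratian_add_one_add_one hX hY m (-n - 1)
    rw [sub_add_cancel, ih] at h
    rw [← neg_neg (casoratian X Y m _), ← h, ← Units.neg_smul, Int.negOnePow_sub,
      Int.negOnePow_one, mul_neg, mul_one]
    congr 2
    ring

end Casoratian

theorem bi_mul_bi : bi * bi = -1 := by
  simp only [bi, Algebra.TensorProduct.tmul_mul_tmul, Complex.I_mul_I, mul_one,
    Algebra.TensorProduct.one_def, TensorProduct.neg_tmul]

theorem bj_mul_bj : bj * bj = -1 := by
  simp only [bj, Algebra.TensorProduct.tmul_mul_tmul, Complex.I_mul_I, mul_one,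
    Algebra.TensorProduct.one_def, TensorProduct.tmul_neg]

theorem bi_mul_bj : bi * bj = bij := by
  simp only [bi, bj, bij, Algebra.TensorProduct.tmul_mul_tmul, mul_one, one_mul]

theorem bi_mul_bij : bi * bij = -bj := by
  simp only [bi, bj, bij, Algebra.TensorProduct.tmul_mul_tmul, Complex.I_mul_I, one_mul,
    TensorProduct.neg_tmul]

theorem bj_mul_bij : bj * bij = -bi := by
  simp only [bi, bj, bij, Algebra.TensorProduct.tmul_mul_tmul, Complex.I_mul_I, one_mul,
    TensorProduct.tmul_neg]

theorem bij_mul_bij : bij * bij = 1 := by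
  simp only [bij, Algebra.TensorProduct.tmul_mul_tmul, Complex.I_mul_I,
    Algebra.TensorProduct.one_def, TensorProduct.neg_tmul, TensorProduct.tmul_neg, neg_neg]

theorem bicomplex_mul_coords (x₁ x₂ x₃ x₄ y₁ y₂ y₃ y₄ : ℝ) :
    (x₁ • (1 : ℂ ⊗[ℝ] ℂ) + x₂ • bi + x₃ • bj + x₄ • bij) *
      (y₁ • (1 : ℂ ⊗[ℝ] ℂ) + y₂ • bi + y₃ • bj + y₄ • bij) =
    (x₁ * y₁ - x₂ * y₂ - x₃ * y₃ + x₄ * y₄) • (1 : ℂ ⊗[ℝ] ℂ)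
      + (x₁ * y₂ + x₂ * y₁ - x₃ * y₄ - x₄ * y₃) • bi
      + (x₁ * y₃ + x₃ * y₁ - x₂ * y₄ - x₄ * y₂) • bj
      + (x₁ * y₄ + x₄ * y₁ + x₂ * y₃ + x₃ * y₂) • bij := by
  simp only [add_mul, mul_add, smul_mul_smul_comm, one_mul, mul_one, bi_mul_bi, bj_mul_bj,
    bij_mul_bij, bi_mul_bj, bi_mul_bij, bj_mul_bij, mul_comm bj bi, mul_comm bij bi,
    mul_comm bij bj, smul_neg]
  module

section BicomplexPell

variable {P : ℤ → ℤ}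

theorem BP_eq_coords (hP : ∀ n : ℤ, P (n + 2) = 2 * P (n + 1) + P n) (n : ℤ) :
    BP P n = (P n : ℝ) • (1 : ℂ ⊗[ℝ] ℂ) + (P (n + 1) : ℝ) • bi
      + (2 * P (n + 1) + P n : ℝ) • bj + (5 * P (n + 1) + 2 * P n : ℝ) • bij := by
  have h₃ : P (n + 3) = 2 * P (n + 2) + P (n + 1) := by
    rw [show n + 3 = n + 1 + 2 by ring, hP, add_assoc n 1 1, one_add_one_eq_two]
  rw [BP, h₃, hP n]
  push_cast
  module

theorem BP_add_two (hP : ∀ n : ℤ, P (n + 2) = 2 * P (n + 1) + P n) (n : ℤ) :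
    BP P (n + 2) = 2 * BP P (n + 1) + BP P n := by
  have h₃ : P (n + 2 + 1) = 2 * P (n + 2) + P (n + 1) := by
    rw [show n + 2 + 1 = n + 1 + 2 by ring, hP, add_assoc n 1 1, one_add_one_eq_two]
  rw [two_mul, BP_eq_coords hP, BP_eq_coords hP (n + 1), BP_eq_coords hP n, h₃,
    add_assoc n 1 1, one_add_one_eq_two, hP n]
  push_cast
  module

theorem casoratian_BP_zero (hP : ∀ n : ℤ, P (n + 2) = 2 * P (n + 1) + P n) (hP0 : P 0 = 0)
    (hP1 : P 1 = 1) (k : ℤ) :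
    casoratian (BP P) (BP P) k 0 = (12 * (P k : ℝ)) • (bj + bij) := by
  have h₂ : P 2 = 2 := by simpa [hP0, hP1] using hP 0
  simp only [casoratian, BP_eq_coords hP, zero_add, add_assoc k 1 1, one_add_one_eq_two,
    hP k, h₂, hP0, hP1, bicomplex_mul_coords]
  push_cast
  match_scalars <;> ring

end BicomplexPell

theorem bicomplexPell_dOcagne (P : ℤ → ℤ)
    (hP : ∀ n : ℤ, P (n + 2) = 2 * P (n + 1) + P n) (hP0 : P 0 = 0) (hP1 : P 1 = 1)
    (m n : ℤ) :
    BP P m * BP P (n + 1) - BP P (m + 1) * BP P n =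
      (12 * (-1 : ℝ) ^ n * (P (m - n) : ℝ)) • (bj + bij) := by
  have h := casoratian_eq_negOnePow_smul (BP_add_two hP) (BP_add_two hP) m n
  rw [casoratian_BP_zero hP hP0 hP1, Units.smul_def, ← Int.cast_smul_eq_zsmul ℝ, smul_smul,
    Int.cast_negOnePow] at h
  rw [← casoratian, h, mul_left_comm, ← mul_assoc]
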